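/- arXiv:2207.13200 — 2 statements merged into one kernel-verified Lean document; each statement's English description precedes it below -/
import Mathlib

section
/- Assume D is nonexpansive (λ = 1) and 0 < γ ≤ 1/(L+2τ). Then for every x ∈ E and every x* ∈ E with G(x*) = 0, ‖x − γ·G(x) − x*‖² ≤ ‖x − x*‖² − (γ/(L+2τ))·‖G(x)‖². -/
/-!
Write `u = x - x*`. The step `x ↦ x - γ G(x)` is Fejér monotone towards zeros of `G` as soon as
`G` is `1/(L+2τ)`-cocoercive, i.e. `‖G x - G y‖² ≤ (L + 2τ) ⟪G x - G y, x - y⟫`: expanding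
`‖u - γ G x‖²` and using cocoercivity at `(x, x*)` gives the claim for `γ ≤ 1/(L+2τ)`.
Cocoercivity of `G` comes from that of its two summands, with constants adding under sums
(Cauchy–Schwarz): `∇g` is `1/L`-cocoercive by the Baillon–Haddad theorem (tilt `g` so that `x`
becomes a minimiser, then one gradient step of length `1/L` descends by `‖∇g‖²/(2L)`), and
`I - D` is `1/2`-cocoercive because `D` is nonexpansive.
-/

open InnerProductSpace Set AffineMap

local notation "⟪" x ", " y "⟫" => @inner ℝ _ _ x y

section Cocoercive

variable {F : Type*} [NormedAddCommGroup F] [InnerProductSpace ℝ F]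

/-- `CocoerciveWith K T` means that `T` is `1/K`-cocoercive; the constant is inverted so that
constants add under sums. -/
def CocoerciveWith (K : ℝ) (T : F → F) : Prop :=
  ∀ x y, ‖T x - T y‖ ^ 2 ≤ K * ⟪T x - T y, x - y⟫

theorem cocoerciveWith_two_id_sub {D : F → F} (hD : ∀ x y, ‖D x - D y‖ ≤ ‖x - y‖) :
    CocoerciveWith 2 (fun x => x - D x) := by
  intro x y
  have hD' := pow_le_pow_left₀ (norm_nonneg _) (hD x y) 2
  rw [sub_sub_sub_comm]
  set u := x - y
  set p := D x - D y
  rw [norm_sub_sq_real, inner_sub_left u p u, real_inner_self_eq_norm_sq, real_inner_comm u]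
  linarith

theorem CocoerciveWith.const_smul {K c : ℝ} {T : F → F} (hT : CocoerciveWith K T) (hc : 0 ≤ c) :
    CocoerciveWith (c * K) (fun x => c • T x) := by
  intro x y
  rw [← smul_sub, norm_smul, mul_pow, Real.norm_of_nonneg hc, real_inner_smul_left]
  have := mul_le_mul_of_nonneg_left (hT x y) (sq_nonneg c)
  linarith

theorem CocoerciveWith.add {K₁ K₂ : ℝ} {T₁ T₂ : F → F} (hT₁ : CocoerciveWith K₁ T₁)
    (hT₂ : CocoerciveWith K₂ T₂) (hK₁ : 0 < K₁) (hK₂ : 0 < K₂) :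
    CocoerciveWith (K₁ + K₂) (fun x => T₁ x + T₂ x) := by
  intro x y
  have ha := hT₁ x y
  have hb := hT₂ x y
  rw [add_sub_add_comm, inner_add_left]
  set a := T₁ x - T₁ y
  set b := T₂ x - T₂ y
  -- `(A + B)² ≤ (K₁ + K₂) (A² / K₁ + B² / K₂)`, cleared of denominators
  have hCS : K₁ * K₂ * (‖a‖ + ‖b‖) ^ 2 ≤ (K₁ + K₂) * (K₂ * ‖a‖ ^ 2 + K₁ * ‖b‖ ^ 2) := by
    nlinarith [sq_nonneg (K₂ * ‖a‖ - K₁ * ‖b‖)]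
  have htri := pow_le_pow_left₀ (norm_nonneg _) (norm_add_le a b) 2
  refine le_of_mul_le_mul_left ?_ (mul_pos hK₁ hK₂)
  nlinarith [mul_le_mul_of_nonneg_left ha hK₂.le, mul_le_mul_of_nonneg_left hb hK₁.le,
    mul_le_mul_of_nonneg_left htri (mul_pos hK₁ hK₂).le]

theorem CocoerciveWith.norm_sub_smul_sub_sq_le {K γ : ℝ} {T : F → F} (hT : CocoerciveWith K T)
    (hK : 0 < K) {x₀ : F} (hx₀ : T x₀ = 0) (hγ0 : 0 ≤ γ) (hγ : γ ≤ 1 / K) (x : F) :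
    ‖x - γ • T x - x₀‖ ^ 2 ≤ ‖x - x₀‖ ^ 2 - γ / K * ‖T x‖ ^ 2 := by
  have hcoc := hT x x₀
  rw [hx₀, sub_zero] at hcoc
  have hγK : γ * K ≤ 1 := by rwa [le_div_iff₀ hK] at hγ
  have hexp : x - γ • T x - x₀ = (x - x₀) - γ • T x := by abel
  rw [hexp, norm_sub_sq_real, real_inner_smul_right, norm_smul, Real.norm_of_nonneg hγ0,
    real_inner_comm]
  have h1 := mul_le_mul_of_nonneg_left hcoc (by positivity : 0 ≤ 2 * γ / K)
  have h2 := mul_le_mul_of_nonneg_right hγK (by positivity : 0 ≤ γ / K * ‖T x‖ ^ 2)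
  field_simp at h1 h2 ⊢
  nlinarith

end Cocoercive

section Smooth

variable {F : Type*} [NormedAddCommGroup F] [InnerProductSpace ℝ F] [CompleteSpace F]
  {f : F → ℝ} {f' : F → F} {L : ℝ}

theorem HasGradientAt.hasDerivAt_comp_lineMap {g x y : F} {t : ℝ}
    (h : HasGradientAt f g (lineMap x y t)) :
    HasDerivAt (fun s => f (lineMap x y s)) ⟪g, y - x⟫ t :=
  h.hasFDerivAt.comp_hasDerivAt t hasDerivAt_lineMap

theorem ConvexOn.add_inner_gradient_le (hconv : ConvexOn ℝ univ f) {g x : F}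
    (hf : HasGradientAt f g x) (y : F) :
    f x + ⟪g, y - x⟫ ≤ f y := by
  have hline : ConvexOn ℝ univ (fun t : ℝ => f (lineMap x y t)) := by
    simpa [Function.comp_def] using hconv.comp_affineMap (lineMap x y)
  have hderiv : HasDerivAt (fun t : ℝ => f (lineMap x y t)) ⟪g, y - x⟫ 0 :=
    (by simpa using hf : HasGradientAt f g (lineMap x y (0 : ℝ))).hasDerivAt_comp_lineMap
  have := hline.le_slope_of_hasDerivAt (mem_univ 0) (mem_univ 1) one_pos hderiv
  simp only [slope_def_field, lineMap_apply_one, lineMap_apply_zero, sub_zero, div_one] at this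
  linarith

theorem le_add_inner_gradient_add_sq (hf : ∀ x, HasGradientAt f (f' x) x)
    (hLip : ∀ x y, ‖f' x - f' y‖ ≤ L * ‖x - y‖) (x y : F) :
    f y ≤ f x + ⟪f' x, y - x⟫ + L / 2 * ‖y - x‖ ^ 2 := by
  set ψ : ℝ → ℝ := fun t => f (lineMap x y t) - t * ⟪f' x, y - x⟫ - L / 2 * t ^ 2 * ‖y - x‖ ^ 2
  have hψ : ∀ t, HasDerivAt ψ (⟪f' (lineMap x y t) - f' x, y - x⟫ - L * t * ‖y - x‖ ^ 2) t := by
    intro t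
    have := (((hf (lineMap x y t)).hasDerivAt_comp_lineMap).sub
      ((hasDerivAt_id t).mul_const ⟪f' x, y - x⟫)).sub
        (((hasDerivAt_pow 2 t).const_mul (L / 2)).mul_const (‖y - x‖ ^ 2))
    refine this.congr_deriv ?_
    rw [inner_sub_left]
    push_cast
    ring
  have hψ' : ∀ t ∈ interior (Icc (0 : ℝ) 1), deriv ψ t ≤ 0 := by
    intro t ht
    rw [interior_Icc] at ht
    have hdist : ‖lineMap x y t - x‖ = t * ‖y - x‖ := by
      rw [← dist_eq_norm, dist_lineMap_left, Real.norm_of_nonneg ht.1.le, dist_eq_norm']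
    calc deriv ψ t = ⟪f' (lineMap x y t) - f' x, y - x⟫ - L * t * ‖y - x‖ ^ 2 := (hψ t).deriv
      _ ≤ ‖f' (lineMap x y t) - f' x‖ * ‖y - x‖ - L * t * ‖y - x‖ ^ 2 := by
        gcongr; exact real_inner_le_norm _ _
      _ ≤ L * (t * ‖y - x‖) * ‖y - x‖ - L * t * ‖y - x‖ ^ 2 := by
        gcongr; rw [← hdist]; exact hLip _ _
      _ = 0 := by ring
  have hanti : AntitoneOn ψ (Icc 0 1) :=
    antitoneOn_of_deriv_nonpos (convex_Icc 0 1) (fun t _ => (hψ t).continuousAt.continuousWithinAt)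
      (fun t _ => (hψ t).differentiableAt.differentiableWithinAt) hψ'
  have := hanti (left_mem_Icc.2 zero_le_one) (right_mem_Icc.2 zero_le_one) zero_le_one
  simp only [ψ, lineMap_apply_one, lineMap_apply_zero, one_mul, one_pow, mul_one, zero_mul,
    sub_zero, ne_eq, OfNat.ofNat_ne_zero, not_false_eq_true, zero_pow, mul_zero] at this
  linarith

theorem sq_norm_gradient_le_of_isMinOn (hL : 0 < L) (hf : ∀ x, HasGradientAt f (f' x) x)
    (hLip : ∀ x y, ‖f' x - f' y‖ ≤ L * ‖x - y‖) {x : F} (hx : IsMinOn f univ x) (y : F) :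
    ‖f' y‖ ^ 2 ≤ 2 * L * (f y - f x) := by
  have hstep := le_add_inner_gradient_add_sq hf hLip y (y - L⁻¹ • f' y)
  have hmin : f x ≤ f (y - L⁻¹ • f' y) := hx (mem_univ _)
  rw [sub_sub_cancel_left, inner_neg_right, real_inner_smul_right, real_inner_self_eq_norm_sq,
    norm_neg, norm_smul, Real.norm_of_nonneg (inv_nonneg.2 hL.le)] at hstep
  linear_combination (2 * L) * (hmin.trans hstep)
    + (‖f' y‖ ^ 2 * (L * L⁻¹ - 1)) * mul_inv_cancel₀ hL.ne'

theorem ConvexOn.sq_norm_gradient_sub_le (hL : 0 < L) (hconv : ConvexOn ℝ univ f)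
    (hf : ∀ x, HasGradientAt f (f' x) x) (hLip : ∀ x y, ‖f' x - f' y‖ ≤ L * ‖x - y‖) (x y : F) :
    ‖f' y - f' x‖ ^ 2 ≤ 2 * L * (f y - f x - ⟪f' x, y - x⟫) := by
  set h : F → ℝ := fun z => f z - ⟪f' x, z⟫
  have hh : ∀ z, HasGradientAt h (f' z - f' x) z := fun z => by
    simpa [map_sub] using
      ((hf z).hasFDerivAt.fun_sub (toDual ℝ F (f' x)).hasFDerivAt).hasGradientAt
  have hconv' : ConvexOn ℝ univ h :=
    hconv.sub ((innerₛₗ ℝ (f' x)).concaveOn convex_univ)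
  have hmin : IsMinOn h univ x := fun z _ => by
    simpa using hconv'.add_inner_gradient_le (hh x) z
  have := sq_norm_gradient_le_of_isMinOn hL hh (fun a b => by simpa using hLip a b) hmin y
  simp only [h] at this
  rw [inner_sub_right]
  linarith

theorem ConvexOn.cocoerciveWith_gradient (hL : 0 < L) (hconv : ConvexOn ℝ univ f)
    (hf : ∀ x, HasGradientAt f (f' x) x) (hLip : ∀ x y, ‖f' x - f' y‖ ≤ L * ‖x - y‖) :
    CocoerciveWith L f' := by
  intro x y
  have hxy := hconv.sq_norm_gradient_sub_le hL hf hLip x y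
  have hyx := hconv.sq_norm_gradient_sub_le hL hf hLip y x
  rw [norm_sub_rev] at hxy
  have : ⟪f' x - f' y, x - y⟫ = -⟪f' x, y - x⟫ - ⟪f' y, x - y⟫ := by
    rw [← neg_sub x y, inner_neg_right, inner_sub_left]
    ring
  rw [this]
  linarith

end Smooth

/-- Proposition 2: for a nonexpansive prior and `0 < γ ≤ 1/(L+2τ)`, a gradient-type
step on `G` contracts towards any zero of `G`. -/
theorem G_step_fejer {n : ℕ}
    (g : EuclideanSpace ℝ (Fin n) → ℝ)
    (g' D G : EuclideanSpace ℝ (Fin n) → EuclideanSpace ℝ (Fin n))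
    (L τ γ : ℝ)
    (hL : 0 < L)
    (hgconv : ConvexOn ℝ Set.univ g)
    (hgrad : ∀ x, HasGradientAt g (g' x) x)
    (hgLip : ∀ x y, ‖g' x - g' y‖ ≤ L * ‖x - y‖)
    (hD : ∀ x y, ‖D x - D y‖ ≤ ‖x - y‖)
    (hτ : 0 < τ)
    (hG : ∀ x, G x = g' x + τ • (x - D x))
    (hγ0 : 0 < γ) (hγ : γ ≤ 1 / (L + 2 * τ)) :
    ∀ x xstar : EuclideanSpace ℝ (Fin n), G xstar = 0 →
      ‖x - γ • G x - xstar‖ ^ 2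
        ≤ ‖x - xstar‖ ^ 2 - (γ / (L + 2 * τ)) * ‖G x‖ ^ 2 := by
  obtain rfl : G = fun x => g' x + τ • (x - D x) := funext hG
  have hcoc : CocoerciveWith (L + τ * 2) fun x => g' x + τ • (x - D x) :=
    (hgconv.cocoerciveWith_gradient hL hgrad hgLip).add
      ((cocoerciveWith_two_id_sub hD).const_smul hτ.le) hL (by positivity)
  rw [mul_comm τ 2] at hcoc
  exact fun x xstar hstar => hcoc.norm_sub_smul_sub_sq_le (by positivity) hstar hγ0.le hγ x
end

section
/- Let h : E → ℝ be convex and continuous, μ > 0, and x ∈ E. Suppose v ∈ E is a subgradient of h at x, i.e. h(y) ≥ h(x) + ⟨v, y − x⟩ for all y ∈ E. Then 0 ≤ h(x) − (1/μ)·h_μ(x) ≤ (μ/2)·‖v‖². In particular, if h is Lipschitz continuous with constant S > 0, then 0 ≤ h(x) − (1/μ)·h_μ(x) ≤ (μ/2)·S² for all x ∈ E. -/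
open scoped RealInnerProductSpace

/-!
Both bounds follow from a lower bound `h x - c‖w - x‖ ≤ h w` with `c = ‖v‖` (Cauchy–Schwarz
applied to the subgradient inequality) or `c = S` (Lipschitz continuity). Testing the infimum at
`w = x` gives `h_μ(x) ≤ μ h(x)`, and completing the square,
`½t² - μct = ½(t - μc)² - ½μ²c² ≥ -½μ²c²`, gives `h_μ(x) ≥ μ h(x) - ½μ²c²`.
-/

noncomputable def moreauEnvelope {E : Type*} [SeminormedAddCommGroup E]
    (h : E → ℝ) (μ : ℝ) (x : E) : ℝ :=
  ⨅ w : E, ((1 / 2) * ‖w - x‖ ^ 2 + μ * h w)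

section MoreauEnvelope

variable {E : Type*} [SeminormedAddCommGroup E] {h : E → ℝ} {μ c : ℝ} {x : E}

theorem moreauEnvelope_objective_ge_of_lower_bound (hμ : 0 ≤ μ)
    (hx : ∀ w, h x - c * ‖w - x‖ ≤ h w) (w : E) :
    μ * h x - μ ^ 2 * c ^ 2 / 2 ≤ (1 / 2) * ‖w - x‖ ^ 2 + μ * h w := by
  have hμh : μ * (h x - c * ‖w - x‖) ≤ μ * h w := mul_le_mul_of_nonneg_left (hx w) hμ
  nlinarith [sq_nonneg (‖w - x‖ - μ * c)]

theorem moreauEnvelope_le_of_lower_bound (hμ : 0 ≤ μ)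
    (hx : ∀ w, h x - c * ‖w - x‖ ≤ h w) : moreauEnvelope h μ x ≤ μ * h x := by
  have hbdd : BddBelow (Set.range fun w : E => (1 / 2) * ‖w - x‖ ^ 2 + μ * h w) :=
    ⟨_, Set.forall_mem_range.2 (moreauEnvelope_objective_ge_of_lower_bound hμ hx)⟩
  simpa [moreauEnvelope] using ciInf_le hbdd x

theorem le_moreauEnvelope_of_lower_bound (hμ : 0 ≤ μ)
    (hx : ∀ w, h x - c * ‖w - x‖ ≤ h w) :
    μ * h x - μ ^ 2 * c ^ 2 / 2 ≤ moreauEnvelope h μ x :=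
  le_ciInf (moreauEnvelope_objective_ge_of_lower_bound hμ hx)

theorem moreauEnvelope_gap_bounds_of_lower_bound (hμ : 0 < μ)
    (hx : ∀ w, h x - c * ‖w - x‖ ≤ h w) :
    0 ≤ h x - (1 / μ) * moreauEnvelope h μ x ∧
      h x - (1 / μ) * moreauEnvelope h μ x ≤ (μ / 2) * c ^ 2 := by
  have hupper := moreauEnvelope_le_of_lower_bound hμ.le hx
  have hlower := le_moreauEnvelope_of_lower_bound hμ.le hx
  constructor
  · rw [sub_nonneg, one_div_mul_eq_div, div_le_iff₀' hμ]
    exact hupper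
  · rw [sub_le_comm, one_div_mul_eq_div, le_div_iff₀' hμ]
    linarith

theorem lower_bound_of_lipschitz {S : ℝ} (hS : ∀ a b, |h a - h b| ≤ S * ‖a - b‖) (w : E) :
    h x - S * ‖w - x‖ ≤ h w := by
  have := le_of_abs_le (hS x w)
  rw [norm_sub_rev] at this
  linarith

end MoreauEnvelope

theorem lower_bound_of_subgradient {E : Type*} [NormedAddCommGroup E] [InnerProductSpace ℝ E]
    {h : E → ℝ} {x v : E} (hv : ∀ y, h y ≥ h x + ⟪v, y - x⟫) (w : E) :
    h x - ‖v‖ * ‖w - x‖ ≤ h w := by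
  have := neg_le_of_abs_le (abs_real_inner_le_norm v (w - x))
  linarith [hv w]

theorem moreau_envelope_uniform_bound_general {n : ℕ}
    (h : EuclideanSpace ℝ (Fin n) → ℝ) (μ : ℝ) (hμpos : 0 < μ)
    (x v : EuclideanSpace ℝ (Fin n))
    (hv : ∀ y, h y ≥ h x + ⟪v, y - x⟫) :
    (0 ≤ h x - (1 / μ) * (⨅ w : EuclideanSpace ℝ (Fin n),
        ((1 / 2) * ‖w - x‖ ^ 2 + μ * h w)) ∧
      h x - (1 / μ) * (⨅ w : EuclideanSpace ℝ (Fin n),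
        ((1 / 2) * ‖w - x‖ ^ 2 + μ * h w)) ≤ (μ / 2) * ‖v‖ ^ 2) ∧
    ∀ S : ℝ, 0 < S → (∀ a b, |h a - h b| ≤ S * ‖a - b‖) →
      ∀ y : EuclideanSpace ℝ (Fin n),
        0 ≤ h y - (1 / μ) * (⨅ w : EuclideanSpace ℝ (Fin n),
            ((1 / 2) * ‖w - y‖ ^ 2 + μ * h w)) ∧
          h y - (1 / μ) * (⨅ w : EuclideanSpace ℝ (Fin n),
            ((1 / 2) * ‖w - y‖ ^ 2 + μ * h w)) ≤ (μ / 2) * S ^ 2 :=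
  ⟨moreauEnvelope_gap_bounds_of_lower_bound hμpos (lower_bound_of_subgradient hv),
    fun _ _ hLip _ => moreauEnvelope_gap_bounds_of_lower_bound hμpos (lower_bound_of_lipschitz hLip)⟩

/-- Lemma: the Moreau envelope `h_μ` approximates `h` from below:
`0 ≤ h(x) − (1/μ)h_μ(x) ≤ (μ/2)‖v‖²` for any subgradient `v` of `h` at `x`;
in particular, if `h` is `S`-Lipschitz the gap is at most `(μ/2)S²` everywhere. -/
theorem moreau_envelope_uniform_bound {n : ℕ}
    (h : EuclideanSpace ℝ (Fin n) → ℝ) (μ : ℝ) (hμpos : 0 < μ)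
    (hhconv : ConvexOn ℝ Set.univ h) (hhcont : Continuous h)
    (x v : EuclideanSpace ℝ (Fin n))
    (hv : ∀ y, h y ≥ h x + ⟪v, y - x⟫) :
    (0 ≤ h x - (1 / μ) * (⨅ w : EuclideanSpace ℝ (Fin n),
        ((1 / 2) * ‖w - x‖ ^ 2 + μ * h w)) ∧
      h x - (1 / μ) * (⨅ w : EuclideanSpace ℝ (Fin n),
        ((1 / 2) * ‖w - x‖ ^ 2 + μ * h w)) ≤ (μ / 2) * ‖v‖ ^ 2) ∧
    ∀ S : ℝ, 0 < S → (∀ a b, |h a - h b| ≤ S * ‖a - b‖) →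
      ∀ y : EuclideanSpace ℝ (Fin n),
        0 ≤ h y - (1 / μ) * (⨅ w : EuclideanSpace ℝ (Fin n),
            ((1 / 2) * ‖w - y‖ ^ 2 + μ * h w)) ∧
          h y - (1 / μ) * (⨅ w : EuclideanSpace ℝ (Fin n),
            ((1 / 2) * ‖w - y‖ ^ 2 + μ * h w)) ≤ (μ / 2) * S ^ 2 :=
  moreau_envelope_uniform_bound_general h μ hμpos x v hv
end
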